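/- arXiv:2603.18347 — 2 statements merged into one kernel-verified Lean document; each statement's English description precedes it below -/
import Mathlib

section
/- Let T be a spanning tree of a connected graph G whose vertices have positive integer populations, let k ≥ 1 divide the total population, and let I = pop(G)/k be the ideal population. Call an edge e of T a valid cut edge if removing e splits T into two subtrees each of whose total population is a positive integer multiple of I. Then T can be partitioned into k connected components each of population exactly I by removing k−1 edges if and only if T has exactly k−1 valid cut edges. -/
/-!
An edge `e` of the tree is a valid cut exactly when every side of `T - e` has population
divisible by `I` (positivity is automatic). If `T - F` consists of parts of population `I`, the
sides of any `e ∈ F` are unions of parts, so `e` is valid; an edge `e ∉ F` splits a part into two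
nonempty pieces, and the side of `e` containing one piece `Q` is `Q` together with whole parts,
so its population is `≡ pop Q (mod I)` with `0 < pop Q < I`. Hence the valid edges are exactly
`F`. Conversely, deleting valid edges one at a time keeps every component's population a
multiple of `I` (by the same side argument), and deleting `k - 1` edges from a tree leaves
`k` components; `k` positive multiples of `I` summing to `k * I` all equal `I`.
-/

open scoped Classical

/-- Total population of a vertex subset. -/
noncomputable def popSet {V : Type*} [Fintype V] (pop : V → ℕ) (s : Set V) : ℕ :=
  ∑ v ∈ Finset.univ, if v ∈ s then pop v else 0

/-- `e` is a valid cut edge of the tree `T`: it is an edge of `T`, and after deleting it,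
every connected component has population a positive integer multiple of `I`. -/
def ValidCut {V : Type*} [Fintype V] (T : SimpleGraph V) (pop : V → ℕ) (I : ℕ)
    (e : Sym2 V) : Prop :=
  e ∈ T.edgeSet ∧
    ∀ c : (T.deleteEdges {e}).ConnectedComponent,
      ∃ m : ℕ, 1 ≤ m ∧ popSet pop c.supp = m * I

namespace SimpleGraph

variable {V : Type*} {G : SimpleGraph V} {a b u v : V}

lemma Reachable.deleteEdges_or (h : G.Reachable u v) :
    (G.deleteEdges {s(a, b)}).Reachable u v ∨ (G.deleteEdges {s(a, b)}).Reachable u a ∨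
      (G.deleteEdges {s(a, b)}).Reachable u b := by
  obtain ⟨p⟩ := h
  induction p with
  | nil => exact .inl .rfl
  | @cons u x v hux p ih =>
    by_cases he : s(u, x) = s(a, b)
    · rcases Sym2.eq_iff.mp he with ⟨rfl, -⟩ | ⟨rfl, -⟩
      · exact .inr (.inl .rfl)
      · exact .inr (.inr .rfl)
    · have hux' : (G.deleteEdges {s(a, b)}).Adj u x := by simp [hux, he]
      rcases ih with h | h | h
      · exact .inl (hux'.reachable.trans h)
      · exact .inr (.inl (hux'.reachable.trans h))
      · exact .inr (.inr (hux'.reachable.trans h))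

lemma Reachable.mem_of_adj_closed {S : Set V} (hS : ∀ ⦃u v⦄, G.Adj u v → u ∈ S → v ∈ S)
    (h : G.Reachable u v) (hu : u ∈ S) : v ∈ S := by
  obtain ⟨p⟩ := h
  induction p with
  | nil => exact hu
  | cons hadj _ ih => exact ih (hS hadj hu)

lemma deleteEdges_coe_insert (e : Sym2 V) (F : Finset (Sym2 V)) :
    G.deleteEdges ↑(insert e F) = (G.deleteEdges ↑F).deleteEdges {e} := by
  rw [deleteEdges_deleteEdges, Finset.coe_insert, Set.insert_eq, Set.union_comm]

namespace ConnectedComponent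

lemma eq_or_eq_mk_or_eq_mk_of_map_eq {c d : (G.deleteEdges {s(a, b)}).ConnectedComponent}
    (h : c.map (Hom.ofLE (G.deleteEdges_le _)) = d.map (Hom.ofLE (G.deleteEdges_le _))) :
    c = d ∨ c = connectedComponentMk _ a ∨ c = connectedComponentMk _ b := by
  induction c using ConnectedComponent.ind
  induction d using ConnectedComponent.ind
  simp only [map_mk, Hom.ofLE_apply, ConnectedComponent.eq] at h ⊢
  exact h.deleteEdges_or

end ConnectedComponent

lemma IsBridge.card_connectedComponent_deleteEdges [Finite V] (hab : G.Adj a b)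
    (hbr : G.IsBridge s(a, b)) :
    Nat.card (G.deleteEdges {s(a, b)}).ConnectedComponent = Nat.card G.ConnectedComponent + 1 := by
  set G' := G.deleteEdges {s(a, b)}
  let φ : G'.ConnectedComponent → G.ConnectedComponent :=
    ConnectedComponent.map (Hom.ofLE (G.deleteEdges_le _))
  have hAB : G'.connectedComponentMk a ≠ G'.connectedComponentMk b :=
    fun h => hbr (ConnectedComponent.exact h)
  have hφ : φ (G'.connectedComponentMk b) = φ (G'.connectedComponentMk a) := by
    simpa [φ] using hab.symm.reachable
  let f (c : G'.ConnectedComponent) : Option G.ConnectedComponent :=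
    if c = G'.connectedComponentMk b then none else some (φ c)
  have hf : f.Bijective := by
    refine ⟨fun c d hcd => ?_, fun o => ?_⟩
    · by_cases hc : c = G'.connectedComponentMk b <;> by_cases hd : d = G'.connectedComponentMk b
      · rw [hc, hd]
      all_goals simp only [f, hc, hd, if_true, if_false, reduceCtorEq, Option.some.injEq] at hcd
      rcases ConnectedComponent.eq_or_eq_mk_or_eq_mk_of_map_eq hcd with h | h | h
      · exact h
      · rcases ConnectedComponent.eq_or_eq_mk_or_eq_mk_of_map_eq hcd.symm with h' | h' | h'
        · exact h'.symm
        · rw [h, h']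
        · exact absurd h' hd
      · exact absurd h hc
    · cases o with
      | none => exact ⟨G'.connectedComponentMk b, by simp [f]⟩
      | some c =>
        obtain ⟨d, rfl⟩ : ∃ d, φ d = c := ConnectedComponent.surjective_map_ofLE _ c
        by_cases hd : d = G'.connectedComponentMk b
        · exact ⟨G'.connectedComponentMk a, by rw [hd, hφ]; exact if_neg hAB⟩
        · exact ⟨d, if_neg hd⟩
  rw [Nat.card_congr (Equiv.ofBijective f hf), Finite.card_option]

lemma IsAcyclic.card_connectedComponent_deleteEdges [Finite V] (hG : G.IsAcyclic)
    (F : Finset (Sym2 V)) (hF : ↑F ⊆ G.edgeSet) :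
    Nat.card (G.deleteEdges F).ConnectedComponent = Nat.card G.ConnectedComponent + F.card := by
  induction F using Finset.induction_on with
  | empty => simp
  | @insert e F he ih =>
    rw [Finset.coe_insert, Set.insert_subset_iff] at hF
    have heF : e ∈ (G.deleteEdges F).edgeSet := by simp [hF.1, he]
    have hbr := isAcyclic_iff_forall_isBridge.mp (hG.anti (G.deleteEdges_le _)) heF
    cases e with
    | h a b =>
      rw [deleteEdges_coe_insert, hbr.card_connectedComponent_deleteEdges heF,
        ih hF.2, Finset.card_insert_of_notMem he, add_assoc]

lemma Connected.card_connectedComponent (hG : G.Connected) : Nat.card G.ConnectedComponent = 1 :=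
  Nat.card_eq_one_iff_unique.mpr
    ⟨hG.preconnected.subsingleton_connectedComponent, ⟨G.connectedComponentMk hG.nonempty.some⟩⟩

lemma Connected.supp_eq_univ (hG : G.Connected) (c : G.ConnectedComponent) : c.supp = Set.univ :=
  Set.eq_univ_of_forall fun v => by
    induction c using ConnectedComponent.ind with
    | h u => exact ConnectedComponent.sound (hG.preconnected v u)

end SimpleGraph

section Population

open SimpleGraph

variable {V : Type*} [Fintype V] {pop : V → ℕ}

lemma popSet_add_popSet_diff {s t : Set V} (h : s ⊆ t) :
    popSet pop s + popSet pop (t \ s) = popSet pop t := by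
  rw [popSet, popSet, popSet, ← Finset.sum_add_distrib]
  refine Finset.sum_congr rfl fun v _ => ?_
  by_cases hs : v ∈ s
  · simp [hs, h hs]
  · by_cases ht : v ∈ t <;> simp [hs, ht]

lemma popSet_lt_popSet (hpos : ∀ v, 0 < pop v) {s t : Set V} (h : s ⊂ t) :
    popSet pop s < popSet pop t := by
  obtain ⟨v, hvt, hvs⟩ := Set.exists_of_ssubset h
  rw [← popSet_add_popSet_diff h.subset, Nat.lt_add_right_iff_pos]
  exact Finset.sum_pos' (fun _ _ => Nat.zero_le _) ⟨v, Finset.mem_univ v, by simp [hvt, hvs, hpos]⟩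

lemma popSet_pos (hpos : ∀ v, 0 < pop v) {s : Set V} (hs : s.Nonempty) : 0 < popSet pop s := by
  simpa [popSet] using popSet_lt_popSet hpos hs.empty_ssubset

lemma popSet_supp {G : SimpleGraph V} (c : G.ConnectedComponent) :
    popSet pop c.supp = ∑ v with G.connectedComponentMk v = c, pop v := by
  simp [popSet, Finset.sum_filter, ConnectedComponent.mem_supp_iff]

lemma sum_popSet_supp (G : SimpleGraph V) :
    ∑ c : G.ConnectedComponent, popSet pop c.supp = popSet pop Set.univ := by
  simp only [popSet_supp]
  exact (Finset.sum_fiberwise _ _ _).trans (by simp [popSet])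

lemma dvd_popSet_of_adj_closed {G : SimpleGraph V} {I : ℕ}
    (hG : ∀ c : G.ConnectedComponent, I ∣ popSet pop c.supp) {S : Set V}
    (hS : ∀ ⦃u v⦄, G.Adj u v → u ∈ S → v ∈ S) : I ∣ popSet pop S := by
  rw [popSet, ← Finset.sum_fiberwise Finset.univ G.connectedComponentMk]
  refine Finset.dvd_sum fun c _ => ?_
  induction c using ConnectedComponent.ind with | h v => ?_
  have hmem : ∀ u ∈ ({u | G.connectedComponentMk u = G.connectedComponentMk v} : Finset V),
      u ∈ S ↔ v ∈ S := by
    intro u hu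
    have huv : G.Reachable u v := ConnectedComponent.exact (Finset.mem_filter.mp hu).2
    exact ⟨huv.mem_of_adj_closed hS, huv.symm.mem_of_adj_closed hS⟩
  by_cases hv : v ∈ S
  · rw [Finset.sum_congr rfl fun u hu => if_pos ((hmem u hu).mpr hv), ← popSet_supp]
    exact hG _
  · rw [Finset.sum_congr rfl fun u hu => if_neg (mt (hmem u hu).mp hv), Finset.sum_const_zero]
    exact dvd_zero I

end Population

namespace SimpleGraph

variable {V : Type*} [Fintype V] {pop : V → ℕ} {T H : SimpleGraph V} {I : ℕ} {a b : V}

lemma dvd_popSet_supp_mk_deleteEdges_of_le (hHT : H ≤ T) (hbr : T.IsBridge s(a, b))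
    (hH : ∀ c : H.ConnectedComponent, I ∣ popSet pop c.supp)
    (hside : I ∣ popSet pop ((T.deleteEdges {s(a, b)}).connectedComponentMk a).supp) :
    I ∣ popSet pop ((H.deleteEdges {s(a, b)}).connectedComponentMk a).supp := by
  set S := ((T.deleteEdges {s(a, b)}).connectedComponentMk a).supp
  set A := ((H.deleteEdges {s(a, b)}).connectedComponentMk a).supp
  have hAS : A ⊆ S := ConnectedComponent.connectedComponentMk_supp_subset_supp
    (deleteEdges_mono hHT) _ rfl
  -- the rest of `a`'s side is a union of components of `H`
  have hrest : I ∣ popSet pop (S \ A) := by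
    refine dvd_popSet_of_adj_closed hH fun u w huw ⟨huS, huA⟩ => ?_
    by_cases he : s(u, w) = s(a, b)
    · rcases Sym2.eq_iff.mp he with ⟨rfl, -⟩ | ⟨rfl, -⟩
      · exact absurd rfl huA
      · exact absurd (ConnectedComponent.exact huS).symm hbr
    · have hHw : (H.deleteEdges {s(a, b)}).Adj u w := by simp [huw, he]
      have hTw : (T.deleteEdges {s(a, b)}).Adj u w := by simp [hHT huw, he]
      exact ⟨(ConnectedComponent.mem_supp_congr_adj _ hTw).mp huS,
        mt (ConnectedComponent.mem_supp_congr_adj _ hHw).mpr huA⟩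
  rw [← popSet_add_popSet_diff hAS] at hside
  exact (Nat.dvd_add_left hrest).mp hside

lemma dvd_popSet_supp_deleteEdges_of_le (hHT : H ≤ T) (hbr : T.IsBridge s(a, b))
    (hH : ∀ c : H.ConnectedComponent, I ∣ popSet pop c.supp)
    (hT : ∀ c : (T.deleteEdges {s(a, b)}).ConnectedComponent, I ∣ popSet pop c.supp)
    (c : (H.deleteEdges {s(a, b)}).ConnectedComponent) : I ∣ popSet pop c.supp := by
  by_cases hca : c = (H.deleteEdges {s(a, b)}).connectedComponentMk a
  · exact hca ▸ dvd_popSet_supp_mk_deleteEdges_of_le hHT hbr hH (hT _)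
  by_cases hcb : c = (H.deleteEdges {s(a, b)}).connectedComponentMk b
  · have hb := dvd_popSet_supp_mk_deleteEdges_of_le (a := b) (b := a) hHT (by rwa [Sym2.eq_swap]) hH
    rw [Sym2.eq_swap] at hb
    exact hcb ▸ hb (hT _)
  · refine dvd_popSet_of_adj_closed hH fun u w huw hu => ?_
    have he : s(u, w) ≠ s(a, b) := by
      rintro he
      rcases Sym2.eq_iff.mp he with ⟨rfl, -⟩ | ⟨rfl, -⟩
      · exact hca ((ConnectedComponent.mem_supp_iff _ _).mp hu).symm
      · exact hcb ((ConnectedComponent.mem_supp_iff _ _).mp hu).symm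
    exact (c.mem_supp_congr_adj (by simp [huw, he] : (H.deleteEdges {s(a, b)}).Adj u w)).mp hu

end SimpleGraph

section ValidCut

open SimpleGraph

variable {V : Type*} [Fintype V] {pop : V → ℕ} {T : SimpleGraph V} {I : ℕ} {e : Sym2 V}

lemma ValidCut.dvd_popSet_supp (h : ValidCut T pop I e)
    (c : (T.deleteEdges {e}).ConnectedComponent) : I ∣ popSet pop c.supp := by
  obtain ⟨m, -, hm⟩ := h.2 c
  exact ⟨m, hm.trans (mul_comm m I)⟩

lemma validCut_of_dvd (hpos : ∀ v, 0 < pop v) (he : e ∈ T.edgeSet)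
    (h : ∀ c : (T.deleteEdges {e}).ConnectedComponent, I ∣ popSet pop c.supp) :
    ValidCut T pop I e := by
  refine ⟨he, fun c => ?_⟩
  obtain ⟨m, hm⟩ := h c
  have hc := popSet_pos hpos c.nonempty_supp
  refine ⟨m, Nat.pos_of_ne_zero ?_, hm.trans (mul_comm I m)⟩
  rintro rfl
  simp [hm] at hc

lemma SimpleGraph.IsTree.dvd_popSet_supp_deleteEdges_of_validCut (hT : T.IsTree)
    (hI : I ∣ popSet pop Set.univ) (F : Finset (Sym2 V)) (hF : ∀ e ∈ F, ValidCut T pop I e)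
    (c : (T.deleteEdges F).ConnectedComponent) : I ∣ popSet pop c.supp := by
  induction F using Finset.induction_on with
  | empty =>
    have hconn : (T.deleteEdges ↑(∅ : Finset (Sym2 V))).Connected := by simpa using hT.connected
    rwa [hconn.supp_eq_univ c]
  | @insert e F _ ih =>
    have hval := hF e (Finset.mem_insert_self e F)
    have hbr := isAcyclic_iff_forall_isBridge.mp hT.isAcyclic hval.1
    cases e with
    | h a b =>
      revert c
      rw [deleteEdges_coe_insert]
      exact dvd_popSet_supp_deleteEdges_of_le (T.deleteEdges_le _) hbr
        (ih fun e he => hF e (Finset.mem_insert_of_mem he)) (ValidCut.dvd_popSet_supp hval)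

lemma validCut_of_mem {F : Set (Sym2 V)}
    (hpos : ∀ v, 0 < pop v) (hF : ∀ c : (T.deleteEdges F).ConnectedComponent, I ∣ popSet pop c.supp)
    (heF : e ∈ F) (heT : e ∈ T.edgeSet) : ValidCut T pop I e :=
  validCut_of_dvd hpos heT fun c => dvd_popSet_of_adj_closed hF fun _ _ huw hu =>
    (c.mem_supp_congr_adj (deleteEdges_anti (Set.singleton_subset_iff.mpr heF) huw)).mp hu

lemma not_validCut_of_notMem {F : Set (Sym2 V)} (hT : T.IsAcyclic) (hpos : ∀ v, 0 < pop v)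
    (hF : ∀ c : (T.deleteEdges F).ConnectedComponent, popSet pop c.supp = I) (heF : e ∉ F) :
    ¬ ValidCut T pop I e := by
  intro hval
  cases e with | h a b => ?_
  set H := T.deleteEdges F
  have hab : H.Adj a b := by simp [H, (mem_edgeSet T).mp hval.1, heF]
  have hbr : T.IsBridge s(a, b) := isAcyclic_iff_forall_isBridge.mp hT hval.1
  have hdvd := dvd_popSet_supp_mk_deleteEdges_of_le (T.deleteEdges_le F) hbr
    (fun c => dvd_of_eq (hF c).symm) (hval.dvd_popSet_supp _)
  have hlt : popSet pop ((H.deleteEdges {s(a, b)}).connectedComponentMk a).supp < I := by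
    rw [← hF (H.connectedComponentMk a)]
    refine popSet_lt_popSet hpos ((Set.ssubset_iff_of_subset ?_).mpr ⟨b, ?_, fun hb => ?_⟩)
    · exact ConnectedComponent.connectedComponentMk_supp_subset_supp (H.deleteEdges_le _) _ rfl
    · exact ConnectedComponent.sound hab.symm.reachable
    · exact hbr ((ConnectedComponent.exact hb).symm.mono (deleteEdges_mono (T.deleteEdges_le F)))
  exact absurd (Nat.le_of_dvd (popSet_pos hpos (ConnectedComponent.nonempty_supp _)) hdvd)
    (not_le.mpr hlt)

lemma popSet_supp_eq_of_dvd (hpos : ∀ v, 0 < pop v) {G : SimpleGraph V} {k : ℕ}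
    (hcard : Nat.card G.ConnectedComponent = k) (hI : popSet pop Set.univ = k * I)
    (hdvd : ∀ c : G.ConnectedComponent, I ∣ popSet pop c.supp) (c : G.ConnectedComponent) :
    popSet pop c.supp = I := by
  have hle (c : G.ConnectedComponent) : I ≤ popSet pop c.supp :=
    Nat.le_of_dvd (popSet_pos hpos c.nonempty_supp) (hdvd c)
  have hsum : ∑ _c : G.ConnectedComponent, I = ∑ c : G.ConnectedComponent, popSet pop c.supp := by
    rw [sum_popSet_supp, hI, Finset.sum_const, Finset.card_univ, ← Nat.card_eq_fintype_card,
      hcard, smul_eq_mul]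
  exact ((Finset.sum_eq_sum_iff_of_le fun c _ => hle c).mp hsum c (Finset.mem_univ c)).symm

end ValidCut

theorem completelyCuttable_iff_count_validCut_general {V : Type*} [Fintype V]
    (T : SimpleGraph V) (pop : V → ℕ)
    (hpos : ∀ v, 0 < pop v) (hTree : T.IsTree)
    (k I : ℕ) (hk : 1 ≤ k) (hI : popSet pop Set.univ = k * I) :
    (∃ F : Finset (Sym2 V), ↑F ⊆ T.edgeSet ∧ F.card = k - 1 ∧
        ∀ c : (T.deleteEdges ↑F).ConnectedComponent, popSet pop c.supp = I) ↔
      ((Finset.univ : Finset (Sym2 V)).filter (fun e => ValidCut T pop I e)).card = k - 1 := by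
  constructor
  · rintro ⟨F, hFT, hFcard, hF⟩
    suffices hvalid : (Finset.univ.filter fun e => ValidCut T pop I e) = F by rw [hvalid, hFcard]
    ext e
    simp only [Finset.mem_filter, Finset.mem_univ, true_and]
    exact ⟨fun he => by_contra fun heF => not_validCut_of_notMem hTree.isAcyclic hpos hF heF he,
      fun heF => validCut_of_mem hpos (fun c => dvd_of_eq (hF c).symm) heF (hFT heF)⟩
  · intro hcount
    have hvalid (e) (he : e ∈ Finset.univ.filter fun e => ValidCut T pop I e) :
        ValidCut T pop I e := (Finset.mem_filter.mp he).2
    refine ⟨_, fun e he => (hvalid e he).1, hcount, popSet_supp_eq_of_dvd hpos ?_ hI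
      (hTree.dvd_popSet_supp_deleteEdges_of_validCut (hI ▸ dvd_mul_left I k) _ hvalid)⟩
    rw [hTree.isAcyclic.card_connectedComponent_deleteEdges _ fun e he => (hvalid e he).1,
      hTree.connected.card_connectedComponent, hcount]
    omega

/-- A spanning tree `T` of a connected graph `G` can be partitioned into `k` connected
components each of population exactly `I` by removing `k-1` edges iff `T` has exactly
`k-1` valid cut edges. -/
theorem completelyCuttable_iff_count_validCut {V : Type*} [Fintype V]
    (G T : SimpleGraph V) (pop : V → ℕ)
    (hpos : ∀ v, 0 < pop v) (hG : G.Connected) (hT : T ≤ G) (hTree : T.IsTree)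
    (k I : ℕ) (hk : 1 ≤ k) (hI : popSet pop Set.univ = k * I) :
    (∃ F : Finset (Sym2 V), ↑F ⊆ T.edgeSet ∧ F.card = k - 1 ∧
        ∀ c : (T.deleteEdges ↑F).ConnectedComponent, popSet pop c.supp = I) ↔
      ((Finset.univ : Finset (Sym2 V)).filter (fun e => ValidCut T pop I e)).card = k - 1 :=
  completelyCuttable_iff_count_validCut_general T pop hpos hTree k I hk hI
end

section
/- Let G be a connected graph and P = {D_1, …, D_k} a partition of V(G) into sets each inducing a connected subgraph. Then the completely cuttable spanning trees of G inducing the partition P (i.e., spanning trees T such that deleting the edges of T that cross between different parts leaves exactly the induced spanning forests on the D_i, with exactly k−1 crossing edges) are in bijection with tuples consisting of a spanning tree of each induced subgraph G[D_i] together with a spanning tree of the quotient multigraph G/P. Consequently, the number of spanning trees of G whose crossing-edge set has size exactly k−1 and which induce P equals ST(G/P) · ∏_{i=1}^k ST(G[D_i]). -/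
open scoped Classical

/-- The simple graph underlying the set `S` of edges of a multigraph with
endpoint map `ends`. -/
def mgFrom {V E : Type*} (ends : E → Sym2 V) (S : Set E) : SimpleGraph V :=
  SimpleGraph.fromEdgeSet (ends '' S)

/-- `S` is (the edge set of) a spanning tree of the sub-multigraph induced on the
vertex set `D`: all its edges lie inside `D`, the corresponding graph is connected
on `D`, and it has exactly `|D| - 1` edges. -/
def IsSpanningTreeOn {V E : Type*} [Fintype V] [Fintype E] (ends : E → Sym2 V)
    (S : Finset E) (D : Set V) : Prop :=
  (∀ e ∈ S, ∀ v ∈ ends e, v ∈ D) ∧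
    ((mgFrom ends ↑S).induce D).Connected ∧ S.card + 1 = D.ncard

/-- The number of spanning trees of the sub-multigraph induced on `D`. -/
noncomputable def stCountOn {V E : Type*} [Fintype V] [Fintype E] (ends : E → Sym2 V)
    (D : Set V) : ℕ :=
  ((Finset.univ : Finset (Finset E)).filter (fun S => IsSpanningTreeOn ends S D)).card

/-!
Cutting a spanning tree `S` of `G` along the partition splits its edge set into the crossing
edges, which connect `G/P` (every walk of `S` projects to a walk of `G/P`),
and the edges inside each part `D_i`. If `S` has exactly `k - 1` crossing edges and induces a
spanning tree on every `D_i`, the crossing edges are a spanning tree of `G/P`. Conversely, the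
union of a spanning tree of `G/P` and spanning trees of the `G[D_i]` is connected (a walk in `G/P`
lifts through the parts) and has `(k - 1) + ∑ (|D_i| - 1) = |V| - 1` edges, and the two
constructions are mutually inverse. Counting both sides of the bijection gives the formula.
-/

open Function

namespace SimpleGraph

variable {V W : Type*} {G : SimpleGraph V} {G' : SimpleGraph W}

theorem Reachable.of_forall_adj {f : V → W} (hf : ∀ a b, G.Adj a b → G'.Reachable (f a) (f b))
    {u v : V} (h : G.Reachable u v) : G'.Reachable (f u) (f v) := by
  obtain ⟨w⟩ := h
  induction w with
  | nil => rfl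
  | cons hadj _ ih => exact (hf _ _ hadj).trans ih

theorem Connected.reachable_of_induce {D : Set V} (h : (G.induce D).Connected) {v w : V}
    (hv : v ∈ D) (hw : w ∈ D) : G.Reachable v w :=
  (h.preconnected ⟨v, hv⟩ ⟨w, hw⟩).map (Embedding.induce D).toHom

theorem induce_univ_connected_iff : (G.induce Set.univ).Connected ↔ G.Connected :=
  (induceUnivIso G).connected_iff

end SimpleGraph

theorem Fintype.sum_ncard_fiber {V ι : Type*} [Fintype V] [Fintype ι] (p : V → ι) :
    ∑ i, {v | p v = i}.ncard = Fintype.card V := by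
  simp only [Set.ncard_eq_toFinset_card', Set.toFinset_ofPred]
  exact (Finset.card_eq_sum_card_fiberwise fun v _ => Finset.mem_univ (p v)).symm

section MultigraphReachability

variable {V E : Type*} (ends : E → Sym2 V)

theorem mgFrom_adj {S : Set E} {u v : V} :
    (mgFrom ends S).Adj u v ↔ s(u, v) ∈ ends '' S ∧ u ≠ v :=
  SimpleGraph.fromEdgeSet_adj _

theorem mgFrom_mono {S S' : Set E} (h : S ⊆ S') : mgFrom ends S ≤ mgFrom ends S' :=
  SimpleGraph.fromEdgeSet_mono (Set.image_mono h)

variable {ends} in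
theorem mgFrom_reachable_of_mem {S : Set E} {e : E} (he : e ∈ S) {x y : V} (hx : x ∈ ends e)
    (hy : y ∈ ends e) : (mgFrom ends S).Reachable x y := by
  by_cases hxy : x = y
  · exact hxy ▸ .rfl
  · exact SimpleGraph.Adj.reachable <| (mgFrom_adj ends).2
      ⟨⟨e, he, (Sym2.mem_and_mem_iff hxy).1 ⟨hx, hy⟩⟩, hxy⟩

variable [Fintype V] [Fintype E] {ends}

theorem IsSpanningTreeOn.nonempty {S : Finset E} {D : Set V} (h : IsSpanningTreeOn ends S D) :
    D.Nonempty :=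
  Set.nonempty_of_ncard_ne_zero (by rw [← h.2.2]; omega)

theorem IsSpanningTreeOn.reachable {S : Finset E} {D : Set V} (h : IsSpanningTreeOn ends S D)
    {v w : V} (hv : v ∈ D) (hw : w ∈ D) : (mgFrom ends ↑S).Reachable v w :=
  h.2.1.reachable_of_induce hv hw

end MultigraphReachability

namespace Multigraph

section Decomposition

variable {V E ι : Type*}

theorem isDiag_map_iff {p : V → ι} {z : Sym2 V} :
    (z.map p).IsDiag ↔ ∃ i, ∀ v ∈ z, p v = i := by
  induction z using Sym2.ind with
  | _ a b =>
    simp only [Sym2.map_mk, Sym2.mk_isDiag_iff, Sym2.mem_iff, forall_eq_or_imp, forall_eq]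
    exact ⟨fun h => ⟨_, rfl, h.symm⟩, fun ⟨_, ha, hb⟩ => ha.trans hb.symm⟩

theorem eq_of_forall_mem {p : V → ι} {z : Sym2 V} {i j : ι} (hi : ∀ v ∈ z, p v = i)
    (hj : ∀ v ∈ z, p v = j) : i = j :=
  (hi _ z.out_fst_mem).symm.trans (hj _ z.out_fst_mem)

variable (ends : E → Sym2 V) (p : V → ι)

abbrev CrossingEdge := {e : E // ¬ (Sym2.map p (ends e)).IsDiag}

def quotientEnds (e : CrossingEdge ends p) : Sym2 ι := Sym2.map p (ends e.1)

noncomputable def crossingEdges (S : Finset E) : Finset (CrossingEdge ends p) := S.subtype _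

noncomputable def partEdges (S : Finset E) (i : ι) : Finset E :=
  S.filter fun e => ∀ v ∈ ends e, p v = i

noncomputable def assemble [Fintype ι] (Q : Finset (CrossingEdge ends p)) (T : ι → Finset E) :
    Finset E :=
  Q.map (Embedding.subtype _) ∪ Finset.univ.biUnion T

variable {ends p}

@[simp]
theorem mem_crossingEdges {S : Finset E} {e : CrossingEdge ends p} :
    e ∈ crossingEdges ends p S ↔ e.1 ∈ S :=
  Finset.mem_subtype

@[simp]
theorem mem_partEdges {S : Finset E} {i : ι} {e : E} :
    e ∈ partEdges ends p S i ↔ e ∈ S ∧ ∀ v ∈ ends e, p v = i :=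
  Finset.mem_filter

theorem reachable_quotient {S : Finset E} {v w : V} (h : (mgFrom ends ↑S).Reachable v w) :
    (mgFrom (quotientEnds ends p) ↑(crossingEdges ends p S)).Reachable (p v) (p w) := by
  refine h.of_forall_adj fun a b hab => ?_
  obtain ⟨⟨e, heS, hends⟩, -⟩ := (mgFrom_adj ends).1 hab
  by_cases hpab : p a = p b
  · exact hpab ▸ .rfl
  · have hcross : ¬ (Sym2.map p (ends e)).IsDiag := by
      rwa [hends, Sym2.map_mk, Sym2.mk_isDiag_iff]
    have hmem : ∀ x ∈ s(a, b), p x ∈ quotientEnds ends p ⟨e, hcross⟩ := fun x hx =>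
      Sym2.mem_map.2 ⟨x, hends ▸ hx, rfl⟩
    exact mgFrom_reachable_of_mem (mem_crossingEdges.2 heS)
      (hmem a (Sym2.mem_mk_left a b)) (hmem b (Sym2.mem_mk_right a b))

theorem reachable_of_reachable_quotient {S : Finset E} (hp : Surjective p)
    (hpart : ∀ a b, p a = p b → (mgFrom ends ↑S).Reachable a b) {v w : V}
    (h : (mgFrom (quotientEnds ends p) ↑(crossingEdges ends p S)).Reachable (p v) (p w)) :
    (mgFrom ends ↑S).Reachable v w := by
  -- lift the quotient walk through the section `surjInv hp`: the representatives of two adjacent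
  -- parts are joined through the ends of the crossing edge, using `hpart` inside each part
  have hrep := surjInv_eq hp
  have hlift : ∀ i j, (mgFrom (quotientEnds ends p) ↑(crossingEdges ends p S)).Adj i j →
      (mgFrom ends ↑S).Reachable (surjInv hp i) (surjInv hp j) := by
    intro i j hij
    obtain ⟨⟨e, he, hends⟩, -⟩ := (mgFrom_adj _).1 hij
    have hmem : ∀ k ∈ s(i, j), ∃ x ∈ ends e.1, p x = k := fun k hk =>
      Sym2.mem_map.1 (show k ∈ quotientEnds ends p e from hends ▸ hk)
    obtain ⟨x, hx, rfl⟩ := hmem i (Sym2.mem_mk_left i j)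
    obtain ⟨y, hy, rfl⟩ := hmem _ (Sym2.mem_mk_right _ j)
    exact (hpart _ _ (hrep _)).trans <|
      (mgFrom_reachable_of_mem (mem_crossingEdges.1 he) hx hy).trans
        (hpart _ _ (hrep _).symm)
  exact (hpart _ _ (hrep _).symm).trans <|
    (h.of_forall_adj hlift).trans (hpart _ _ (hrep _))

variable [Fintype ι] {Q : Finset (CrossingEdge ends p)} {T : ι → Finset E}

theorem mem_assemble {e : E} :
    e ∈ assemble ends p Q T ↔ (∃ h, ⟨e, h⟩ ∈ Q) ∨ ∃ i, e ∈ T i := by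
  simp [assemble]

theorem assemble_crossingEdges_partEdges (S : Finset E) :
    assemble ends p (crossingEdges ends p S) (partEdges ends p S) = S := by
  ext e
  simp only [mem_assemble, mem_crossingEdges, mem_partEdges]
  refine ⟨by rintro (⟨_, h⟩ | ⟨_, h, -⟩) <;> exact h, fun h => ?_⟩
  by_cases he : (Sym2.map p (ends e)).IsDiag
  · obtain ⟨i, hi⟩ := isDiag_map_iff.1 he
    exact .inr ⟨i, h, hi⟩
  · exact .inl ⟨he, h⟩

theorem subset_assemble (i : ι) : T i ⊆ assemble ends p Q T :=
  fun _ he => mem_assemble.2 (.inr ⟨i, he⟩)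

variable (hT : ∀ i, ∀ e ∈ T i, ∀ v ∈ ends e, p v = i)
include hT

theorem crossingEdges_assemble : crossingEdges ends p (assemble ends p Q T) = Q := by
  ext ⟨e, he⟩
  simp only [mem_crossingEdges, mem_assemble]
  refine ⟨?_, fun h => .inl ⟨he, h⟩⟩
  rintro (⟨_, h⟩ | ⟨i, hi⟩)
  · exact h
  · exact absurd (isDiag_map_iff.2 ⟨i, hT i e hi⟩) he

theorem partEdges_assemble (i : ι) : partEdges ends p (assemble ends p Q T) i = T i := by
  ext e
  simp only [mem_partEdges, mem_assemble]
  refine ⟨?_, fun h => ⟨.inr ⟨i, h⟩, hT i e h⟩⟩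
  rintro ⟨⟨he, -⟩ | ⟨j, hj⟩, hi⟩
  · exact absurd (isDiag_map_iff.2 ⟨i, hi⟩) he
  · exact eq_of_forall_mem (hT j e hj) hi ▸ hj

theorem card_assemble : (assemble ends p Q T).card = Q.card + ∑ i, (T i).card := by
  rw [assemble, Finset.card_union_of_disjoint, Finset.card_map, Finset.card_biUnion]
  · exact fun i _ j _ hij => Finset.disjoint_left.2 fun e hi hj =>
      hij (eq_of_forall_mem (hT i e hi) (hT j e hj))
  · simp only [Finset.disjoint_left, Finset.mem_map, Embedding.coe_subtype, Finset.mem_biUnion,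
      Finset.mem_univ, true_and, forall_exists_index, and_imp]
    rintro _ ⟨e, he⟩ - rfl ⟨i, hi⟩
    exact he (isDiag_map_iff.2 ⟨i, hT i e hi⟩)

end Decomposition

section SpanningTrees

/- The `Fintype` instance on crossing edges is a parameter rather than derived from a classical
`DecidableEq ι`, so that it specializes to the instance elaborated for `Fin k`. -/
variable {V E ι : Type*} [Fintype V] [Fintype E] [Fintype ι] (ends : E → Sym2 V) (p : V → ι)
  [Fintype (CrossingEdge ends p)]

def IsCompletelyCuttable (S : Finset E) : Prop :=
  IsSpanningTreeOn ends S Set.univ ∧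
    (crossingEdges ends p S).card = Fintype.card ι - 1 ∧
    ∀ i, IsSpanningTreeOn ends (partEdges ends p S i) {v | p v = i}

variable {ends p}

theorem IsCompletelyCuttable.isSpanningTreeOn_quotient {S : Finset E}
    (hS : IsCompletelyCuttable ends p S) :
    IsSpanningTreeOn (quotientEnds ends p) (crossingEdges ends p S) Set.univ := by
  obtain ⟨htree, hcut, hparts⟩ := hS
  obtain ⟨v₀, -⟩ := htree.nonempty
  refine ⟨fun _ _ _ _ => trivial, ?_, ?_⟩
  · refine SimpleGraph.induce_univ_connected_iff.2 <|
      (SimpleGraph.connected_iff_exists_forall_reachable _).2 ⟨p v₀, fun i => ?_⟩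
    obtain ⟨w, rfl⟩ := (hparts i).nonempty
    exact reachable_quotient (htree.reachable trivial trivial)
  · have : 0 < Fintype.card ι := Fintype.card_pos_iff.2 ⟨p v₀⟩
    rw [hcut, Set.ncard_univ, Nat.card_eq_fintype_card]
    omega

theorem isCompletelyCuttable_assemble {Q : Finset (CrossingEdge ends p)} {T : ι → Finset E}
    (hQ : IsSpanningTreeOn (quotientEnds ends p) Q Set.univ)
    (hT : ∀ i, IsSpanningTreeOn ends (T i) {v | p v = i}) :
    IsCompletelyCuttable ends p (assemble ends p Q T) := by
  have hinside : ∀ i, ∀ e ∈ T i, ∀ v ∈ ends e, p v = i := fun i => (hT i).1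
  have hQcard : Q.card + 1 = Fintype.card ι := by
    simpa only [Set.ncard_univ, Nat.card_eq_fintype_card] using hQ.2.2
  refine ⟨⟨fun _ _ _ _ => trivial, ?_, ?_⟩, ?_, fun i => ?_⟩
  · have hp : Surjective p := fun i => (hT i).nonempty
    have hpart : ∀ a b, p a = p b → (mgFrom ends ↑(assemble ends p Q T)).Reachable a b :=
      fun a b hab => ((hT (p b)).reachable hab rfl).mono
        (mgFrom_mono ends (Finset.coe_subset.2 (subset_assemble _)))
    obtain ⟨i₀, -⟩ := hQ.nonempty
    refine SimpleGraph.induce_univ_connected_iff.2 <|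
      (SimpleGraph.connected_iff_exists_forall_reachable _).2 ⟨surjInv hp i₀, fun w => ?_⟩
    refine reachable_of_reachable_quotient hp hpart ?_
    rw [crossingEdges_assemble hinside]
    exact hQ.reachable trivial trivial
  · have hsum : ∑ i, ((T i).card + 1) = Fintype.card V := by
      rw [← Fintype.sum_ncard_fiber p]
      exact Finset.sum_congr rfl fun i _ => (hT i).2.2
    rw [card_assemble hinside, Set.ncard_univ, Nat.card_eq_fintype_card, ← hsum,
      Finset.sum_add_distrib, Finset.sum_const, Finset.card_univ, smul_eq_mul, mul_one]
    omega
  · rw [crossingEdges_assemble hinside]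
    omega
  · rw [partEdges_assemble hinside]
    exact hT i

variable (ends) in
theorem isCompletelyCuttable_iff {k : ℕ} (p : V → Fin k) (S : Finset E) :
    IsCompletelyCuttable ends p S ↔
      IsSpanningTreeOn ends S Set.univ ∧
        (S.filter fun e => ¬ (Sym2.map p (ends e)).IsDiag).card = k - 1 ∧
        ∀ i, IsSpanningTreeOn ends (S.filter fun e => ∀ v ∈ ends e, p v = i)
          {v | p v = i} := by
  simp only [IsCompletelyCuttable, partEdges, crossingEdges, Finset.card_subtype, Fintype.card_fin]
  -- the two sides differ only in the `Decidable` instances of the filters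
  congr!

variable (ends p)

noncomputable def completelyCuttableEquiv :
    {S // IsCompletelyCuttable ends p S} ≃
      {Q // IsSpanningTreeOn (quotientEnds ends p) Q Set.univ} ×
        ∀ i, {T // IsSpanningTreeOn ends T {v | p v = i}} where
  toFun S := (⟨_, S.2.isSpanningTreeOn_quotient⟩, fun i => ⟨_, S.2.2.2 i⟩)
  invFun QT := ⟨_, isCompletelyCuttable_assemble QT.1.2 fun i => (QT.2 i).2⟩
  left_inv S := Subtype.ext (assemble_crossingEdges_partEdges S.1)
  right_inv QT := by
    have hinside : ∀ i, ∀ e ∈ (QT.2 i).1, ∀ v ∈ ends e, p v = i := fun i => (QT.2 i).2.1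
    exact Prod.ext (Subtype.ext (crossingEdges_assemble hinside))
      (funext fun i => Subtype.ext (partEdges_assemble hinside i))

theorem card_filter_isCompletelyCuttable :
    (Finset.univ.filter (IsCompletelyCuttable ends p)).card =
      stCountOn (quotientEnds ends p) Set.univ * ∏ i, stCountOn ends {v | p v = i} := by
  simpa only [stCountOn, Fintype.card_subtype, Fintype.card_prod, Fintype.card_pi] using
    Fintype.card_congr (completelyCuttableEquiv ends p)

end SpanningTrees

end Multigraph

theorem count_completelyCuttable_inducing_partition_general {V E : Type*} [Fintype V] [Fintype E]
    (ends : E → Sym2 V)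
    (k : ℕ) (p : V → Fin k) :
    Nonempty
      ({S : Finset E //
          IsSpanningTreeOn ends S Set.univ ∧
          (S.filter (fun e => ¬ (Sym2.map p (ends e)).IsDiag)).card = k - 1 ∧
          ∀ i : Fin k, IsSpanningTreeOn ends
            (S.filter (fun e => ∀ v ∈ ends e, p v = i)) {v | p v = i}} ≃
        {Q : Finset {e : E // ¬ (Sym2.map p (ends e)).IsDiag} //
            IsSpanningTreeOn
              (fun e : {e : E // ¬ (Sym2.map p (ends e)).IsDiag} => Sym2.map p (ends e.1))
              Q (Set.univ : Set (Fin k))} ×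
          ∀ i : Fin k, {S : Finset E // IsSpanningTreeOn ends S {v | p v = i}}) ∧
    ((Finset.univ : Finset (Finset E)).filter (fun S =>
        IsSpanningTreeOn ends S Set.univ ∧
        (S.filter (fun e => ¬ (Sym2.map p (ends e)).IsDiag)).card = k - 1 ∧
        ∀ i : Fin k, IsSpanningTreeOn ends
          (S.filter (fun e => ∀ v ∈ ends e, p v = i)) {v | p v = i})).card =
      stCountOn
          (fun e : {e : E // ¬ (Sym2.map p (ends e)).IsDiag} => Sym2.map p (ends e.1))
          (Set.univ : Set (Fin k)) *
        ∏ i : Fin k, stCountOn ends {v | p v = i} := by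
  have hcut := Multigraph.isCompletelyCuttable_iff ends p
  refine ⟨⟨(Equiv.subtypeEquivRight hcut).symm.trans
    (Multigraph.completelyCuttableEquiv ends p)⟩, ?_⟩
  exact (congrArg Finset.card (Finset.filter_congr fun S _ => (hcut S).symm)).trans
    (Multigraph.card_filter_isCompletelyCuttable ends p)

/-- Completely cuttable spanning trees of a connected multigraph `G` inducing the
connected partition `P` (given by `p : V → Fin k`) are in bijection with tuples of
a spanning tree of the quotient multigraph `G/P` and a spanning tree of each
induced subgraph `G[D i]`; consequently their number is
`ST(G/P) * ∏ i, ST(G[D i])`. -/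
theorem count_completelyCuttable_inducing_partition {V E : Type*} [Fintype V] [Fintype E]
    (ends : E → Sym2 V)
    (hloop : ∀ e, ¬ (ends e).IsDiag)
    (hconn : (mgFrom ends Set.univ).Connected)
    (k : ℕ) (hk : 1 ≤ k) (p : V → Fin k)
    (hne : ∀ i, ∃ v, p v = i)
    (hpartconn : ∀ i : Fin k, ((mgFrom ends Set.univ).induce {v | p v = i}).Connected) :
    Nonempty
      ({S : Finset E //
          IsSpanningTreeOn ends S Set.univ ∧
          (S.filter (fun e => ¬ (Sym2.map p (ends e)).IsDiag)).card = k - 1 ∧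
          ∀ i : Fin k, IsSpanningTreeOn ends
            (S.filter (fun e => ∀ v ∈ ends e, p v = i)) {v | p v = i}} ≃
        {Q : Finset {e : E // ¬ (Sym2.map p (ends e)).IsDiag} //
            IsSpanningTreeOn
              (fun e : {e : E // ¬ (Sym2.map p (ends e)).IsDiag} => Sym2.map p (ends e.1))
              Q (Set.univ : Set (Fin k))} ×
          ∀ i : Fin k, {S : Finset E // IsSpanningTreeOn ends S {v | p v = i}}) ∧
    ((Finset.univ : Finset (Finset E)).filter (fun S =>
        IsSpanningTreeOn ends S Set.univ ∧
        (S.filter (fun e => ¬ (Sym2.map p (ends e)).IsDiag)).card = k - 1 ∧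
        ∀ i : Fin k, IsSpanningTreeOn ends
          (S.filter (fun e => ∀ v ∈ ends e, p v = i)) {v | p v = i})).card =
      stCountOn
          (fun e : {e : E // ¬ (Sym2.map p (ends e)).IsDiag} => Sym2.map p (ends e.1))
          (Set.univ : Set (Fin k)) *
        ∏ i : Fin k, stCountOn ends {v | p v = i} :=
  count_completelyCuttable_inducing_partition_general ends k p
end
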